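/- Let K ⊂ ℝ² be compact and let B ⊂ ℝ² be a bounded open set with K ⊂ B. Let μ be a probability measure on ℝ² with support contained in K and assume the logarithmic energy is finite: −∫∫ log|y−z| d(μ⊗μ)(y,z) < +∞. Then the function β(y,z) := ∫_B ((x−y)/|x−y|²) · ((x−z)/|x−z|²) dx belongs to L¹(B×B, μ⊗μ), i.e. ∫∫ |β(y,z)| d(μ⊗μ)(y,z) < +∞. -/

import Mathlib

open MeasureTheory
open scoped RealInnerProductSpace ENNReal

/-!
Since `(x - y) / |x - y|²` has length `|x - y|⁻¹`, it suffices to bound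
`∫_B |x - y|⁻¹ |x - z|⁻¹ dx` by `C (1 + |log |y - z||)`. With `a = |y - z| / 2`, the larger of
`|x - y|` and `|x - z|` is at least `a`, so the integrand is at most `k(|x - y|) + k(|x - z|)`
where `k(r) = r⁻¹ max(r, a)⁻¹`, and in polar coordinates
`∫_{|x - y| < T} k(|x - y|) dx = 2 |B(0,1)| ∫₀ᵀ max(r, a)⁻¹ dr ≤ 2 |B(0,1)| (1 + log (T / a))`.
The finite logarithmic energy then makes this bound `μ ⊗ μ`-integrable.

Since `Real.log 0 = 0`, finite energy does not rule out atoms of `μ`, so the diagonal is not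
negligible; there `|x - y|⁻²` is not integrable near `y ∈ B`, and `β(y, y)` is the junk value `0`.
-/

open Set Metric Topology

theorem lintegral_Ioc_inv_ofReal {a b : ℝ} (ha : 0 < a) (hab : a ≤ b) :
    ∫⁻ r in Ioc a b, (ENNReal.ofReal r)⁻¹ = ENNReal.ofReal (Real.log (b / a)) := by
  have hint : IntegrableOn (fun r : ℝ => r⁻¹) (Ioc a b) :=
    (ContinuousOn.integrableOn_Icc (continuousOn_inv₀.mono fun r hr =>
      (ha.trans_le hr.1).ne')).mono_set Ioc_subset_Icc_self
  rw [setLIntegral_congr_fun measurableSet_Ioc fun r hr =>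
      (ENNReal.ofReal_inv_of_pos (ha.trans hr.1)).symm,
    ← ofReal_integral_eq_lintegral_ofReal hint
      (ae_restrict_of_forall_mem measurableSet_Ioc fun r hr => (inv_pos.2 (ha.trans hr.1)).le),
    ← intervalIntegral.integral_of_le hab, integral_inv]
  rw [uIcc_of_le hab]
  exact fun h => ha.not_ge h.1

theorem lintegral_Ioo_inv_ofReal_max_le {a T : ℝ} (ha : 0 < a) (haT : a ≤ T) :
    ∫⁻ r in Ioo 0 T, (ENNReal.ofReal (max r a))⁻¹ ≤ 1 + ENNReal.ofReal (Real.log (T / a)) := by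
  calc ∫⁻ r in Ioo 0 T, (ENNReal.ofReal (max r a))⁻¹
      ≤ ∫⁻ r in Ioc 0 a ∪ Ioc a T, (ENNReal.ofReal (max r a))⁻¹ :=
        lintegral_mono_set fun r hr => by
          rcases le_or_gt r a with h | h
          exacts [Or.inl ⟨hr.1, h⟩, Or.inr ⟨h, hr.2.le⟩]
    _ ≤ (∫⁻ r in Ioc 0 a, (ENNReal.ofReal (max r a))⁻¹)
        + ∫⁻ r in Ioc a T, (ENNReal.ofReal (max r a))⁻¹ := lintegral_union_le _ _ _
    _ = (∫⁻ _ in Ioc 0 a, (ENNReal.ofReal a)⁻¹) + ∫⁻ r in Ioc a T, (ENNReal.ofReal r)⁻¹ := by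
        congr 1
        · exact setLIntegral_congr_fun measurableSet_Ioc fun r hr => by rw [max_eq_right hr.2]
        · exact setLIntegral_congr_fun measurableSet_Ioc fun r hr => by rw [max_eq_left hr.1.le]
    _ = 1 + ENNReal.ofReal (Real.log (T / a)) := by
        rw [setLIntegral_const, Real.volume_Ioc, sub_zero, lintegral_Ioc_inv_ofReal ha haT,
          ENNReal.inv_mul_cancel (by simpa using ha) ENNReal.ofReal_ne_top]

theorem inv_ofReal_mul_inv_ofReal_le_add {u v a : ℝ} (h : 2 * a ≤ u + v) :
    (ENNReal.ofReal u)⁻¹ * (ENNReal.ofReal v)⁻¹ ≤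
      (ENNReal.ofReal u)⁻¹ * (ENNReal.ofReal (max u a))⁻¹
        + (ENNReal.ofReal v)⁻¹ * (ENNReal.ofReal (max v a))⁻¹ := by
  rcases le_total u v with huv | hvu
  · refine le_add_right ?_
    gcongr
    exact max_le huv (by linarith)
  · refine le_add_left ?_
    rw [mul_comm]
    gcongr
    exact max_le hvu (by linarith)

theorem enorm_inv_norm_sq_smul_le {E : Type*} [NormedAddCommGroup E] [NormedSpace ℝ E] (w : E) :
    ‖(‖w‖ ^ 2)⁻¹ • w‖ₑ ≤ ‖w‖ₑ⁻¹ := by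
  rcases eq_or_ne w 0 with rfl | hw
  · simp
  · rw [← ofReal_norm, ← ofReal_norm, norm_smul, norm_inv, norm_pow, norm_norm, sq,
      mul_inv, mul_assoc, inv_mul_cancel₀ (norm_ne_zero_iff.2 hw), mul_one,
      ENNReal.ofReal_inv_of_pos (norm_pos_iff.2 hw)]

section AddHaar

variable {E : Type*} [NormedAddCommGroup E] [NormedSpace ℝ E] [FiniteDimensional ℝ E]
  [MeasurableSpace E] [BorelSpace E] (μ : Measure E) [μ.IsAddHaarMeasure]

theorem lintegral_fun_norm_addHaar [Nontrivial E] {f : ℝ → ℝ≥0∞} (hf : Measurable f) :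
    ∫⁻ x, f ‖x‖ ∂μ = Module.finrank ℝ E * μ (ball 0 1) *
      ∫⁻ r in Ioi (0 : ℝ), ENNReal.ofReal (r ^ (Module.finrank ℝ E - 1)) * f r := by
  have hf' : Measurable fun r : Ioi (0 : ℝ) => f r := hf.comp measurable_subtype_coe
  calc ∫⁻ x, f ‖x‖ ∂μ = ∫⁻ x : ({(0 : E)}ᶜ : Set E), f ‖x.1‖ ∂(μ.comap (↑)) := by
        rw [lintegral_subtype_comap (measurableSet_singleton _).compl (fun x => f ‖x‖),
          restrict_compl_singleton]
    _ = ∫⁻ p, f p.2 ∂(μ.toSphere.prod (Measure.volumeIoiPow (Module.finrank ℝ E - 1))) := by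
        simpa using μ.measurePreserving_homeomorphUnitSphereProd.lintegral_comp_emb
          (Homeomorph.measurableEmbedding _) (fun p => f p.2)
    _ = μ.toSphere univ * ∫⁻ r, f r ∂(Measure.volumeIoiPow (Module.finrank ℝ E - 1)) := by
        simpa using lintegral_prod_mul (f := fun _ => (1 : ℝ≥0∞)) (μ := μ.toSphere)
          aemeasurable_const hf'.aemeasurable
    _ = _ := by
        rw [Measure.toSphere_apply_univ, Measure.volumeIoiPow,
          lintegral_withDensity_eq_lintegral_mul _ (by fun_prop) hf',
          ← lintegral_subtype_comap measurableSet_Ioi]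
        rfl

variable {μ}

theorem setLIntegral_ball_inv_mul_inv_max_le (hE : Module.finrank ℝ E = 2) (c : E) {a T : ℝ}
    (ha : 0 < a) (haT : a ≤ T) :
    ∫⁻ x in ball c T, (ENNReal.ofReal ‖x - c‖)⁻¹ * (ENNReal.ofReal (max ‖x - c‖ a))⁻¹ ∂μ
      ≤ 2 * μ (ball 0 1) * (1 + ENNReal.ofReal (Real.log (T / a))) := by
  have : Nontrivial E := Module.nontrivial_of_finrank_eq_succ hE
  set g : ℝ → ℝ≥0∞ := fun r => (ENNReal.ofReal r)⁻¹ * (ENNReal.ofReal (max r a))⁻¹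
  have hg : Measurable g := by fun_prop
  calc ∫⁻ x in ball c T, g ‖x - c‖ ∂μ = ∫⁻ x, (Iio T).indicator g ‖x - c‖ ∂μ := by
        rw [← lintegral_indicator measurableSet_ball]
        congr 1 with x
        simp [indicator, dist_eq_norm]
    _ = ∫⁻ x, (Iio T).indicator g ‖x‖ ∂μ :=
        lintegral_sub_right_eq_self (fun x => (Iio T).indicator g ‖x‖) c
    _ = 2 * μ (ball 0 1) *
          ∫⁻ r in Ioi 0, (Iio T).indicator (fun r => (ENNReal.ofReal (max r a))⁻¹) r := by
        rw [lintegral_fun_norm_addHaar μ (hg.indicator measurableSet_Iio), hE]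
        push_cast
        congr 1
        refine setLIntegral_congr_fun measurableSet_Ioi fun r (hr : 0 < r) => ?_
        by_cases hrT : r < T
        · simp [indicator, hrT, g, ← mul_assoc,
            ENNReal.mul_inv_cancel (ENNReal.ofReal_pos.2 hr).ne']
        · simp [indicator, hrT]
    _ ≤ 2 * μ (ball 0 1) * (1 + ENNReal.ofReal (Real.log (T / a))) := by
        rw [setLIntegral_indicator measurableSet_Iio, inter_comm, Ioi_inter_Iio]
        gcongr
        exact lintegral_Ioo_inv_ofReal_max_le ha haT

theorem setLIntegral_ball_inv_enorm_mul_inv_enorm_le (hE : Module.finrank ℝ E = 2) {R : ℝ}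
    {y z : E} (hy : ‖y‖ < R) (hz : ‖z‖ < R) (hyz : y ≠ z) :
    ∫⁻ x in ball 0 R, ‖x - y‖ₑ⁻¹ * ‖x - z‖ₑ⁻¹ ∂μ
      ≤ 4 * μ (ball 0 1) * (1 + ENNReal.ofReal (Real.log (4 * R / ‖y - z‖))) := by
  set a := ‖y - z‖ / 2 with ha_def
  have ha : 0 < a := by have := norm_pos_iff.2 (sub_ne_zero.2 hyz); positivity
  have haR : a ≤ 2 * R := by linarith [norm_sub_le y z]
  have hball : ∀ w : E, ‖w‖ < R → ball (0 : E) R ⊆ ball w (2 * R) := fun w hw x hx => by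
    rw [mem_ball, dist_eq_norm]
    linarith [norm_sub_le x w, mem_ball_zero_iff.1 hx]
  set k : E → E → ℝ≥0∞ := fun w x =>
    (ENNReal.ofReal ‖x - w‖)⁻¹ * (ENNReal.ofReal (max ‖x - w‖ a))⁻¹
  have hk : ∀ w, Measurable (k w) := fun w => by fun_prop
  have hkR : ∀ w : E, ‖w‖ < R → ∫⁻ x in ball 0 R, k w x ∂μ
      ≤ 2 * μ (ball 0 1) * (1 + ENNReal.ofReal (Real.log (4 * R / ‖y - z‖))) := fun w hw =>
    calc ∫⁻ x in ball 0 R, k w x ∂μ ≤ ∫⁻ x in ball w (2 * R), k w x ∂μ :=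
          lintegral_mono_set (hball w hw)
      _ ≤ _ := by
          rw [show 4 * R / ‖y - z‖ = 2 * R / a by rw [ha_def]; field_simp; ring]
          exact setLIntegral_ball_inv_mul_inv_max_le hE w ha haR
  calc ∫⁻ x in ball 0 R, ‖x - y‖ₑ⁻¹ * ‖x - z‖ₑ⁻¹ ∂μ
      ≤ ∫⁻ x in ball 0 R, k y x + k z x ∂μ := lintegral_mono fun x => by
        simp only [← ofReal_norm, k]
        refine inv_ofReal_mul_inv_ofReal_le_add ?_
        linarith [norm_sub_le_norm_sub_add_norm_sub y x z, norm_sub_rev y x]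
    _ = (∫⁻ x in ball 0 R, k y x ∂μ) + ∫⁻ x in ball 0 R, k z x ∂μ := lintegral_add_left (hk y) _
    _ ≤ _ := by
        rw [show (4 : ℝ≥0∞) = 2 + 2 by norm_num, add_mul, add_mul]
        exact add_le_add (hkR y hy) (hkR z hz)

theorem not_integrableOn_inv_norm_sub_sq (hE : Module.finrank ℝ E = 2) {c : E} {s : Set E}
    (hs : s ∈ 𝓝 c) : ¬ IntegrableOn (fun x => (‖x - c‖ ^ 2)⁻¹) s μ := by
  have : Nontrivial E := Module.nontrivial_of_finrank_eq_succ hE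
  intro h
  obtain ⟨ε, hε, hεs⟩ := Metric.mem_nhds_iff.1 hs
  have hball : IntegrableOn (fun x : E => (‖x‖ ^ 2)⁻¹) (ball 0 ε) μ := by
    have := ((measurePreserving_add_right μ c).integrableOn_comp_preimage
      (measurableEmbedding_addRight c)).2 (h.mono_set hεs)
    simpa [Function.comp_def, preimage_add_right_ball] using this
  have hradial := (integrableOn_fun_norm_addHaar μ (f := fun y => (y ^ 2)⁻¹)).1 hball
  rw [hE] at hradial
  have : IntegrableOn (fun y : ℝ => y ^ (-1 : ℝ)) (Ioo 0 ε) := by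
    refine hradial.congr_fun (fun y (hy : y ∈ Ioo 0 ε) => ?_) measurableSet_Ioo
    rw [Real.rpow_neg_one]
    simp only [smul_eq_mul, Nat.add_one_sub_one, pow_one]
    field_simp [hy.1.ne']
  exact lt_irrefl _ ((intervalIntegral.integrableOn_Ioo_rpow_iff hε).1 this)

end AddHaar

section GradLogPairing

variable {E : Type*} [NormedAddCommGroup E] [InnerProductSpace ℝ E] [MeasurableSpace E]
  [BorelSpace E]

/-- The function `β` of the statement: `(‖x - y‖ ^ 2)⁻¹ • (x - y)` is the gradient of
`x ↦ log ‖x - y‖`. -/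
noncomputable def gradLogPairing (μ : Measure E) (B : Set E) (y z : E) : ℝ :=
  ∫ x in B, ⟪(‖x - y‖ ^ 2)⁻¹ • (x - y), (‖x - z‖ ^ 2)⁻¹ • (x - z)⟫ ∂μ

theorem stronglyMeasurable_gradLogPairing [SecondCountableTopology E] (μ : Measure E) [SFinite μ]
    (B : Set E) : StronglyMeasurable fun p : E × E => gradLogPairing μ B p.1 p.2 :=
  StronglyMeasurable.integral_prod_right' (f := fun q : (E × E) × E =>
    ⟪(‖q.2 - q.1.1‖ ^ 2)⁻¹ • (q.2 - q.1.1), (‖q.2 - q.1.2‖ ^ 2)⁻¹ • (q.2 - q.1.2)⟫)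
    (Measurable.stronglyMeasurable (by fun_prop))

variable [FiniteDimensional ℝ E] {μ : Measure E} [μ.IsAddHaarMeasure]

theorem gradLogPairing_self (hE : Module.finrank ℝ E = 2) {B : Set E} {y : E} (hB : B ∈ 𝓝 y) :
    gradLogPairing μ B y y = 0 := by
  have hself : ∀ w : E, ⟪(‖w‖ ^ 2)⁻¹ • w, (‖w‖ ^ 2)⁻¹ • w⟫ = (‖w‖ ^ 2)⁻¹ := fun w => by
    rcases eq_or_ne w 0 with rfl | hw
    · simp
    · rw [real_inner_self_eq_norm_sq, norm_smul, norm_inv, norm_pow, norm_norm]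
      field_simp [norm_ne_zero_iff.2 hw]
  simp only [gradLogPairing, hself]
  exact integral_undef (not_integrableOn_inv_norm_sub_sq hE hB)

theorem norm_gradLogPairing_le (hE : Module.finrank ℝ E = 2) {B : Set E} {R : ℝ}
    (hBR : B ⊆ ball 0 R) {y z : E} (hy : ‖y‖ < R) (hz : ‖z‖ < R) (hyz : y ≠ z) :
    ‖gradLogPairing μ B y z‖ ≤ 4 * μ.real (ball 0 1) * (1 + Real.log (4 * R / ‖y - z‖)) := by
  have hlog : 0 ≤ Real.log (4 * R / ‖y - z‖) := by
    have := norm_pos_iff.2 (sub_ne_zero.2 hyz)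
    exact Real.log_nonneg ((one_le_div this).2 (by linarith [norm_sub_le y z]))
  rw [← ENNReal.ofReal_le_ofReal_iff (by positivity), ofReal_norm, ENNReal.ofReal_mul
    (by positivity), ENNReal.ofReal_mul (by norm_num), ofReal_measureReal measure_ball_lt_top.ne,
    ENNReal.ofReal_add zero_le_one hlog, ENNReal.ofReal_one, ENNReal.ofReal_ofNat]
  calc ‖gradLogPairing μ B y z‖ₑ
      ≤ ∫⁻ x in B, ‖⟪(‖x - y‖ ^ 2)⁻¹ • (x - y), (‖x - z‖ ^ 2)⁻¹ • (x - z)⟫‖ₑ ∂μ :=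
        enorm_integral_le_lintegral_enorm _
    _ ≤ ∫⁻ x in ball 0 R, ‖x - y‖ₑ⁻¹ * ‖x - z‖ₑ⁻¹ ∂μ := by
        refine (lintegral_mono fun x => ?_).trans (lintegral_mono_set hBR)
        calc ‖⟪(‖x - y‖ ^ 2)⁻¹ • (x - y), (‖x - z‖ ^ 2)⁻¹ • (x - z)⟫‖ₑ
            ≤ ‖(‖x - y‖ ^ 2)⁻¹ • (x - y)‖ₑ * ‖(‖x - z‖ ^ 2)⁻¹ • (x - z)‖ₑ := by
              simp only [← ofReal_norm]
              rw [← ENNReal.ofReal_mul (norm_nonneg _)]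
              exact ENNReal.ofReal_le_ofReal (norm_inner_le_norm _ _)
          _ ≤ ‖x - y‖ₑ⁻¹ * ‖x - z‖ₑ⁻¹ :=
              mul_le_mul' (enorm_inv_norm_sq_smul_le _) (enorm_inv_norm_sq_smul_le _)
    _ ≤ _ := setLIntegral_ball_inv_enorm_mul_inv_enorm_le hE hy hz hyz

theorem norm_gradLogPairing_le_log (hE : Module.finrank ℝ E = 2) {B : Set E} (hB : IsOpen B)
    {R : ℝ} (hBR : B ⊆ ball 0 R) {y z : E} (hy : y ∈ B) (hz : z ∈ B) :
    ‖gradLogPairing μ B y z‖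
      ≤ 4 * μ.real (ball 0 1) * (1 + |Real.log (4 * R)| + |Real.log ‖y - z‖|) := by
  rcases eq_or_ne y z with rfl | hyz
  · rw [gradLogPairing_self hE (hB.mem_nhds hy), norm_zero]
    positivity
  have hyR := mem_ball_zero_iff.1 (hBR hy)
  have hzR := mem_ball_zero_iff.1 (hBR hz)
  refine (norm_gradLogPairing_le hE hBR hyR hzR hyz).trans ?_
  have hR : 4 * R ≠ 0 := by linarith [norm_nonneg y]
  rw [Real.log_div hR (norm_ne_zero_iff.2 (sub_ne_zero.2 hyz))]
  gcongr 4 * _ * ?_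
  linarith [le_abs_self (Real.log (4 * R)), neg_abs_le (Real.log ‖y - z‖)]

end GradLogPairing

theorem stmt4_general
    (K B : Set (EuclideanSpace ℝ (Fin 2)))
    (hBopen : IsOpen B) (hBbd : Bornology.IsBounded B) (hKB : K ⊆ B)
    (μ : Measure (EuclideanSpace ℝ (Fin 2))) [IsProbabilityMeasure μ]
    (hμK : μ Kᶜ = 0)
    (henergy : Integrable
      (fun p : EuclideanSpace ℝ (Fin 2) × EuclideanSpace ℝ (Fin 2) =>
        Real.log ‖p.1 - p.2‖) (μ.prod μ)) :
    Integrable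
      (fun p : EuclideanSpace ℝ (Fin 2) × EuclideanSpace ℝ (Fin 2) =>
        ∫ x in B, ⟪(‖x - p.1‖ ^ 2)⁻¹ • (x - p.1), (‖x - p.2‖ ^ 2)⁻¹ • (x - p.2)⟫)
      (μ.prod μ) := by
  obtain ⟨R, hBR⟩ := hBbd.subset_ball (0 : EuclideanSpace ℝ (Fin 2))
  have hK : ∀ᵐ x ∂μ, x ∈ K := mem_ae_iff.2 hμK
  have hKK : ∀ᵐ p ∂μ.prod μ, p.1 ∈ K ∧ p.2 ∈ K :=
    (Measure.quasiMeasurePreserving_fst.ae hK).and (Measure.quasiMeasurePreserving_snd.ae hK)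
  refine Integrable.mono'
    (((integrable_const (1 + |Real.log (4 * R)|)).add henergy.abs).const_mul
      (4 * volume.real (ball (0 : EuclideanSpace ℝ (Fin 2)) 1)))
    (stronglyMeasurable_gradLogPairing volume B).aestronglyMeasurable ?_
  filter_upwards [hKK] with p hp
  exact norm_gradLogPairing_le_log finrank_euclideanSpace_fin hBopen hBR (hKB hp.1) (hKB hp.2)

/-- If `μ` is a probability measure supported in a compact `K ⊆ B ⊆ ℝ²`
(`B` bounded open) with finite logarithmic energy, then
`β(y,z) = ∫_B (x-y)/|x-y|² · (x-z)/|x-z|² dx` belongs to `L¹(B×B, μ⊗μ)`. -/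
theorem stmt4
    (K B : Set (EuclideanSpace ℝ (Fin 2))) (hK : IsCompact K)
    (hBopen : IsOpen B) (hBbd : Bornology.IsBounded B) (hKB : K ⊆ B)
    (μ : Measure (EuclideanSpace ℝ (Fin 2))) [IsProbabilityMeasure μ]
    (hμK : μ Kᶜ = 0)
    (henergy : Integrable
      (fun p : EuclideanSpace ℝ (Fin 2) × EuclideanSpace ℝ (Fin 2) =>
        Real.log ‖p.1 - p.2‖) (μ.prod μ)) :
    Integrable
      (fun p : EuclideanSpace ℝ (Fin 2) × EuclideanSpace ℝ (Fin 2) =>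
        ∫ x in B, ⟪(‖x - p.1‖ ^ 2)⁻¹ • (x - p.1), (‖x - p.2‖ ^ 2)⁻¹ • (x - p.2)⟫)
      (μ.prod μ) :=
  stmt4_general K B hBopen hBbd hKB μ hμK henergy
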